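/- arXiv:1508.05330 — 6 statements merged into one kernel-verified Lean document; each statement's English description precedes it below -/
import Mathlib

section
/- Let f : X × Y → ℝ and points x_1,…,x_{k+1} ∈ X, y_1,…,y_{k+1} ∈ Y. Assume the k×k matrix F^k = (f(x_l, y_m))_{1≤l,m≤k} is invertible, and define I_k(f)(x,y) = Σ_{1≤l,m≤k} ((F^k)⁻ᵀ)_{l,m} f(x_l, y) f(x, y_m). If f(x_{k+1}, y_{k+1}) ≠ I_k(f)(x_{k+1}, y_{k+1}), then the (k+1)×(k+1) matrix F^{k+1} = (f(x_l, y_m))_{1≤l,m≤k+1} is invertible. -/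
open Matrix BigOperators

theorem eim_stopping_criterion {X Y : Type*} [Nonempty X] [Nonempty Y]
    (f : X → Y → ℝ) (k : ℕ) (hk : 1 ≤ k)
    (x : Fin (k + 1) → X) (y : Fin (k + 1) → Y)
    (Fk : Matrix (Fin k) (Fin k) ℝ)
    (hFk : ∀ l m : Fin k, Fk l m = f (x l.castSucc) (y m.castSucc))
    (hinv : IsUnit Fk.det)
    (hne : f (x (Fin.last k)) (y (Fin.last k)) ≠
      ∑ l : Fin k, ∑ m : Fin k,
        (Fk⁻¹)ᵀ l m * f (x l.castSucc) (y (Fin.last k)) * f (x (Fin.last k)) (y m.castSucc)) :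
    IsUnit (Matrix.det (Matrix.of fun l m : Fin (k + 1) => f (x l) (y m))) := by
  classical
  set B : Matrix (Fin k) (Fin 1) ℝ := Matrix.of fun l _ => f (x l.castSucc) (y (Fin.last k)) with hB
  set C : Matrix (Fin 1) (Fin k) ℝ := Matrix.of fun _ m => f (x (Fin.last k)) (y m.castSucc) with hC
  set D : Matrix (Fin 1) (Fin 1) ℝ := Matrix.of fun _ _ => f (x (Fin.last k)) (y (Fin.last k)) with hD
  have hnat : ∀ j : Fin 1, Fin.natAdd k j = Fin.last k := by
    intro j
    ext
    simp [Fin.last]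
  have key : (Matrix.of fun l m : Fin (k + 1) => f (x l) (y m)).submatrix
      finSumFinEquiv finSumFinEquiv = Matrix.fromBlocks Fk B C D := by
    ext i j
    rcases i with i | i <;> rcases j with j | j <;>
      simp [Matrix.fromBlocks, hFk, hnat, hB, hC, hD, Fin.castSucc, Fin.castAdd, Fin.castLE]
  have hdet : (Matrix.of fun l m : Fin (k + 1) => f (x l) (y m)).det
      = (Matrix.fromBlocks Fk B C D).det := by
    rw [← key, Matrix.det_submatrix_equiv_self]
  have hI : Invertible Fk := Fk.invertibleOfIsUnitDet hinv
  rw [hdet, Matrix.det_fromBlocks₁₁, Matrix.invOf_eq_nonsing_inv]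
  have hscal : (D - C * Fk⁻¹ * B) 0 0 ≠ 0 := by
    have hcomp : (C * Fk⁻¹ * B) 0 0 =
        ∑ l : Fin k, ∑ m : Fin k,
          (Fk⁻¹)ᵀ l m * f (x l.castSucc) (y (Fin.last k)) * f (x (Fin.last k)) (y m.castSucc) := by
      simp only [Matrix.mul_apply, Finset.sum_mul, Matrix.transpose_apply, hB, hC,
        Matrix.of_apply]
      refine Finset.sum_congr rfl fun l _ => Finset.sum_congr rfl fun m _ => ?_
      ring
    intro h
    apply hne
    have := sub_eq_zero.mp h
    simpa [hD, hcomp] using this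
  have h2 : IsUnit (D - C * Fk⁻¹ * B).det := by
    rw [Matrix.det_fin_one]
    exact isUnit_iff_ne_zero.mpr hscal
  exact hinv.mul h2
end

section
/- Let f : X × Y → ℝ with F^k invertible and I_k(f) defined via D^k = (F^k)⁻ᵀ as I_k(f)(x,y) = Σ_{1≤l,m≤k} D^k_{l,m} f(x_l, y) f(x, y_m). Suppose λ_1,…,λ_{k+1} ∈ ℝ satisfy Σ_{m=1}^{k} λ_m f(x_l, y_m) = −λ_{k+1} f(x_l, y_{k+1}) for all l ∈ {1,…,k}. Then for every x ∈ X, Σ_{m=1}^{k} λ_m f(x, y_m) = −λ_{k+1} I_k(f)(x, y_{k+1}). -/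
open Matrix BigOperators

theorem eim_dependence_propagates {X Y : Type*} [Nonempty X] [Nonempty Y]
    (f : X → Y → ℝ) (k : ℕ) (hk : 1 ≤ k)
    (x : Fin k → X) (y : Fin (k + 1) → Y)
    (Fk : Matrix (Fin k) (Fin k) ℝ)
    (hFk : ∀ l m : Fin k, Fk l m = f (x l) (y m.castSucc))
    (hinv : IsUnit Fk.det)
    (lam : Fin (k + 1) → ℝ)
    (hlam : ∀ l : Fin k,
      (∑ m : Fin k, lam m.castSucc * f (x l) (y m.castSucc)) =
        -(lam (Fin.last k)) * f (x l) (y (Fin.last k))) :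
    ∀ a : X,
      (∑ m : Fin k, lam m.castSucc * f a (y m.castSucc)) =
        -(lam (Fin.last k)) *
          (∑ l : Fin k, ∑ m : Fin k,
            (Fk⁻¹)ᵀ l m * f (x l) (y (Fin.last k)) * f a (y m.castSucc)) := by
  intro a
  set v : Fin k → ℝ := fun m => lam m.castSucc with hv
  set w : Fin k → ℝ := fun l => -(lam (Fin.last k)) * f (x l) (y (Fin.last k)) with hw
  have hFv : Fk.mulVec v = w := by
    funext l
    simp only [Matrix.mulVec, dotProduct, hw]
    rw [← hlam l]
    apply Finset.sum_congr rfl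
    intro m _
    rw [hFk l m]; ring
  have hvw : v = Fk⁻¹.mulVec w := by
    rw [← hFv, Matrix.mulVec_mulVec, Matrix.nonsing_inv_mul _ hinv, Matrix.one_mulVec]
  calc (∑ m : Fin k, lam m.castSucc * f a (y m.castSucc))
      = ∑ m : Fin k, (Fk⁻¹.mulVec w) m * f a (y m.castSucc) := by
        apply Finset.sum_congr rfl; intro m _; rw [show lam m.castSucc = v m from rfl, hvw]
    _ = ∑ m : Fin k, ∑ l : Fin k, -(lam (Fin.last k)) *
          ((Fk⁻¹)ᵀ l m * f (x l) (y (Fin.last k)) * f a (y m.castSucc)) := by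
        apply Finset.sum_congr rfl; intro m _
        simp only [Matrix.mulVec, dotProduct, hw, Matrix.transpose_apply,
          Finset.sum_mul]
        apply Finset.sum_congr rfl; intro l _; ring
    _ = -(lam (Fin.last k)) *
          (∑ l : Fin k, ∑ m : Fin k,
            (Fk⁻¹)ᵀ l m * f (x l) (y (Fin.last k)) * f a (y m.castSucc)) := by
        rw [Finset.sum_comm, Finset.mul_sum]
        exact Finset.sum_congr rfl fun l _ => (Finset.mul_sum _ _ _).symm
end

section
/- Let X, Y be finite nonempty sets and ‖·‖_Y any norm on the space of functions Y → ℝ. Suppose x_{k+1} maximizes x ↦ ‖(f − I_k(f))(x, ·)‖_Y and y_{k+1} maximizes y ↦ |(f − I_k(f))(x_{k+1}, y)|. If (f − I_k(f))(x_{k+1}, y_{k+1}) = 0, then f = I_k(f) on X × Y. -/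
open Matrix BigOperators

/-- The EIM separated approximation built from `k` interpolation points. -/
noncomputable def EIMinterp {X Y : Type*} (f : X → Y → ℝ) {k : ℕ}
    (x : Fin k → X) (y : Fin k → Y) (a : X) (b : Y) : ℝ :=
  ∑ l, ∑ m, ((Matrix.of fun l m : Fin k => f (x l) (y m))⁻¹)ᵀ l m * f (x l) b * f a (y m)

theorem eim_termination_any_norm {X Y : Type*} [Fintype X] [Fintype Y]
    [Nonempty X] [Nonempty Y]
    (f : X → Y → ℝ) (k : ℕ) (hk : 1 ≤ k)
    (x : Fin (k + 1) → X) (y : Fin (k + 1) → Y)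
    (hinv : IsUnit (Matrix.det
      (Matrix.of fun l m : Fin k => f (x l.castSucc) (y m.castSucc))))
    -- an arbitrary norm on functions `Y → ℝ`
    (N : (Y → ℝ) → ℝ)
    (hN0 : ∀ g : Y → ℝ, N g = 0 ↔ g = 0)
    (hNadd : ∀ g h : Y → ℝ, N (g + h) ≤ N g + N h)
    (hNsmul : ∀ (c : ℝ) (g : Y → ℝ), N (c • g) = |c| * N g)
    -- residual
    (R : X → Y → ℝ)
    (hR : ∀ a b, R a b = f a b -
      EIMinterp f (fun l : Fin k => x l.castSucc) (fun m : Fin k => y m.castSucc) a b)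
    -- `x (Fin.last k)` maximizes `x ↦ ‖R(x,·)‖_Y`
    (hx : ∀ a : X, N (fun b => R a b) ≤ N (fun b => R (x (Fin.last k)) b))
    -- `y (Fin.last k)` maximizes `y ↦ |R(x_{k+1}, y)|`
    (hy : ∀ b : Y, |R (x (Fin.last k)) b| ≤ |R (x (Fin.last k)) (y (Fin.last k))|)
    (hzero : R (x (Fin.last k)) (y (Fin.last k)) = 0) :
    ∀ (a : X) (b : Y),
      f a b = EIMinterp f (fun l : Fin k => x l.castSucc)
        (fun m : Fin k => y m.castSucc) a b := by
  intro a b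
  -- R(x_last, ·) = 0
  have hRlast : (fun b => R (x (Fin.last k)) b) = 0 := by
    funext c
    have h := hy c
    rw [hzero, abs_zero] at h
    simpa using abs_nonpos_iff.mp h
  have hNlast : N (fun b => R (x (Fin.last k)) b) = 0 := (hN0 _).mpr hRlast
  -- N is nonneg
  have hnonneg : ∀ g : Y → ℝ, 0 ≤ N g := by
    intro g
    have h0 : N (0 : Y → ℝ) = 0 := (hN0 0).mpr rfl
    have := hNadd g (-g)
    have hneg : N (-g) = N g := by
      have := hNsmul (-1) g
      simpa using this
    have : N (0 : Y → ℝ) ≤ N g + N g := by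
      simpa [hneg] using hNadd g (-g)
    linarith [h0 ▸ this]
  have hNa : N (fun b => R a b) = 0 := le_antisymm (hNlast ▸ hx a) (hnonneg _)
  have := congrFun ((hN0 _).mp hNa) b
  have hRab : R a b = 0 := this
  have := hR a b
  linarith
end

section
/- Let 𝓕 be a real vector space, σ_1,…,σ_{k+1} : 𝓕 → ℝ linear forms, f_1,…,f_{k+1} ∈ 𝓕. Assume F̂^k = (σ_l(f_m))_{1≤l,m≤k} is invertible and define I_k(g) = Σ_{1≤l,m≤k} ((F̂^k)⁻ᵀ)_{l,m} σ_l(g) f_m. If σ_{k+1}(f_{k+1}) ≠ σ_{k+1}(I_k(f_{k+1})), then F̂^{k+1} = (σ_l(f_m))_{1≤l,m≤k+1} is invertible. -/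
open Matrix BigOperators

theorem geim_stopping_criterion {V : Type*} [AddCommGroup V] [Module ℝ V]
    (k : ℕ) (hk : 1 ≤ k)
    (σ : Fin (k + 1) → V →ₗ[ℝ] ℝ) (g : Fin (k + 1) → V)
    (Fk : Matrix (Fin k) (Fin k) ℝ)
    (hFk : ∀ l m : Fin k, Fk l m = σ l.castSucc (g m.castSucc))
    (hinv : IsUnit Fk.det)
    (hne : σ (Fin.last k) (g (Fin.last k)) ≠
      σ (Fin.last k) (∑ l : Fin k, ∑ m : Fin k,
        ((Fk⁻¹)ᵀ l m * σ l.castSucc (g (Fin.last k))) • g m.castSucc)) :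
    IsUnit (Matrix.det (Matrix.of fun l m : Fin (k + 1) => σ l (g m))) := by
  classical
  set F : Matrix (Fin (k+1)) (Fin (k+1)) ℝ :=
    Matrix.of fun l m : Fin (k + 1) => σ l (g m) with hF
  have := Fk.invertibleOfIsUnitDet hinv
  set B : Matrix (Fin k) (Fin 1) ℝ :=
    Matrix.of fun l _ => σ l.castSucc (g (Fin.last k)) with hB
  set C : Matrix (Fin 1) (Fin k) ℝ :=
    Matrix.of fun _ m => σ (Fin.last k) (g m.castSucc) with hC
  set D : Matrix (Fin 1) (Fin 1) ℝ :=
    Matrix.of fun _ _ => σ (Fin.last k) (g (Fin.last k)) with hD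
  have hlast : ∀ j : Fin 1, finSumFinEquiv (Sum.inr j : Fin k ⊕ Fin 1) = Fin.last k := by
    intro j
    fin_cases j
    simp [finSumFinEquiv, Fin.natAdd, Fin.last]
  have hcast : ∀ i : Fin k, finSumFinEquiv (Sum.inl i : Fin k ⊕ Fin 1) = i.castSucc := by
    intro i
    simp [finSumFinEquiv, Fin.castAdd, Fin.castSucc]
  have hsub : F.submatrix (finSumFinEquiv (m := k) (n := 1))
      (finSumFinEquiv (m := k) (n := 1)) = Matrix.fromBlocks Fk B C D := by
    ext i j
    cases i <;> cases j <;>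
      simp only [Matrix.submatrix_apply, hlast, hcast, Matrix.fromBlocks,
        Sum.elim_inl, Sum.elim_inr, hF, hB, hC, hD, Matrix.of_apply, hFk]
  have hdet : F.det = Fk.det * (D - C * Fk⁻¹ * B).det := by
    rw [← Matrix.det_submatrix_equiv_self (finSumFinEquiv (m := k) (n := 1)) F, hsub,
      Matrix.det_fromBlocks₁₁, Matrix.invOf_eq_nonsing_inv]
  have hσ : σ (Fin.last k) (∑ l : Fin k, ∑ m : Fin k,
      ((Fk⁻¹)ᵀ l m * σ l.castSucc (g (Fin.last k))) • g m.castSucc)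
      = ∑ l : Fin k, ∑ m : Fin k,
        Fk⁻¹ m l * σ l.castSucc (g (Fin.last k)) * σ (Fin.last k) (g m.castSucc) := by
    rw [map_sum]
    refine Finset.sum_congr rfl fun l _ => ?_
    rw [map_sum]
    refine Finset.sum_congr rfl fun m _ => ?_
    rw [LinearMap.map_smul, smul_eq_mul, Matrix.transpose_apply]
  have hCB : (C * Fk⁻¹ * B) 0 0 = ∑ l : Fin k, ∑ m : Fin k,
      σ (Fin.last k) (g m.castSucc) * Fk⁻¹ m l * σ l.castSucc (g (Fin.last k)) := by
    simp [Matrix.mul_apply, Finset.sum_mul, hB, hC]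
  have hscalar : (D - C * Fk⁻¹ * B).det
      = σ (Fin.last k) (g (Fin.last k)) -
        σ (Fin.last k) (∑ l : Fin k, ∑ m : Fin k,
          ((Fk⁻¹)ᵀ l m * σ l.castSucc (g (Fin.last k))) • g m.castSucc) := by
    rw [Matrix.det_fin_one, Matrix.sub_apply, hCB, hσ, hD]
    simp only [Matrix.of_apply]
    congr 1
    refine Finset.sum_congr rfl fun l _ => Finset.sum_congr rfl fun m _ => ?_
    ring
  rw [hdet]
  exact hinv.mul (isUnit_iff_ne_zero.mpr (by rw [hscalar]; exact sub_ne_zero.mpr hne))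
end

section
/- Let 𝓕 be a real vector space, σ_1,…,σ_{k+1} linear forms, f_1,…,f_{k+1} ∈ 𝓕 with F̂^k = (σ_l(f_m))_{1≤l,m≤k} invertible, and I_k defined via (F̂^k)⁻ᵀ. If F̂^{k+1} is singular, then there exist λ_1,…,λ_{k+1} with λ_{k+1} ≠ 0 such that σ_l(Σ_{m=1}^{k+1} λ_m f_m) = 0 for all l ∈ {1,…,k+1}, and moreover Σ_{m=1}^{k} λ_m f_m = −λ_{k+1} I_k(f_{k+1}). -/
open Matrix BigOperators

theorem geim_singular_gives_dependence {V : Type*} [AddCommGroup V] [Module ℝ V]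
    (k : ℕ) (hk : 1 ≤ k)
    (σ : Fin (k + 1) → V →ₗ[ℝ] ℝ) (g : Fin (k + 1) → V)
    (Fk : Matrix (Fin k) (Fin k) ℝ)
    (hFk : ∀ l m : Fin k, Fk l m = σ l.castSucc (g m.castSucc))
    (hinv : IsUnit Fk.det)
    (hsing : ¬ IsUnit (Matrix.det (Matrix.of fun l m : Fin (k + 1) => σ l (g m)))) :
    ∃ lam : Fin (k + 1) → ℝ, lam (Fin.last k) ≠ 0 ∧
      (∀ l : Fin (k + 1), σ l (∑ m, lam m • g m) = 0) ∧
      (∑ m : Fin k, lam m.castSucc • g m.castSucc) =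
        (-(lam (Fin.last k))) • (∑ l : Fin k, ∑ m : Fin k,
          ((Fk⁻¹)ᵀ l m * σ l.castSucc (g (Fin.last k))) • g m.castSucc) := by
  classical
  set v : Fin k → ℝ := fun j => σ j.castSucc (g (Fin.last k)) with hv
  set c : Fin k → ℝ := Fk⁻¹ *ᵥ v with hc
  set lam : Fin (k + 1) → ℝ := Fin.lastCases 1 (fun m => - c m) with hlam
  have hlast : lam (Fin.last k) = 1 := by simp [hlam]
  have hcast : ∀ m : Fin k, lam m.castSucc = - c m := by
    intro m; simp [hlam]
  have hFc : Fk *ᵥ c = v := by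
    rw [hc, Matrix.mulVec_mulVec, Matrix.mul_nonsing_inv Fk hinv, Matrix.one_mulVec]
  -- value of σ l on the combination, for l in castSucc range
  have key : ∀ l : Fin (k + 1), σ l (∑ m, lam m • g m)
      = ∑ m : Fin k, lam m.castSucc * σ l (g m.castSucc) + lam (Fin.last k) * σ l (g (Fin.last k)) := by
    intro l
    rw [map_sum, Fin.sum_univ_castSucc]
    simp [smul_eq_mul]
  have hzero : ∀ l : Fin k, σ l.castSucc (∑ m, lam m • g m) = 0 := by
    intro l
    rw [key, hlast]
    have : ∑ m : Fin k, lam m.castSucc * σ l.castSucc (g m.castSucc)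
        = - (Fk *ᵥ c) l := by
      simp only [Matrix.mulVec, dotProduct, hFk, hcast]
      rw [← Finset.sum_neg_distrib]
      congr 1; ext m; ring
    rw [this, hFc]
    simp [hv]
  -- last row: use singularity
  have hlastzero : σ (Fin.last k) (∑ m, lam m • g m) = 0 := by
    by_contra hs
    apply hsing
    rw [← Matrix.isUnit_iff_isUnit_det, ← Matrix.mulVec_injective_iff_isUnit]
    intro x y hxy
    -- reduce to kernel
    have hker : ∀ z : Fin (k + 1) → ℝ,
        (Matrix.of fun l m : Fin (k + 1) => σ l (g m)) *ᵥ z = 0 → z = 0 := by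
      intro z hz
      have hz' : ∀ l : Fin (k + 1), σ l (∑ m, z m • g m) = 0 := by
        intro l
        have := congrFun hz l
        simpa [Matrix.mulVec, dotProduct, map_sum, smul_eq_mul, mul_comm] using this
      -- top k rows: Fk *ᵥ (z ∘ castSucc) + z last • v = 0
      have htop : ∀ l : Fin k,
          (Fk *ᵥ (fun m => z m.castSucc)) l + z (Fin.last k) * v l = 0 := by
        intro l
        have := hz' l.castSucc
        rw [map_sum, Fin.sum_univ_castSucc] at this
        simpa [Matrix.mulVec, dotProduct, hFk, hv, smul_eq_mul, mul_comm] using this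
      have hzc : (fun m => z m.castSucc) = fun m => z (Fin.last k) • (- c m) := by
        have h1 : Fk *ᵥ (fun m => z m.castSucc) = Fk *ᵥ (fun m => z (Fin.last k) • (- c m)) := by
          funext l
          have h2 : (Fk *ᵥ fun m => z (Fin.last k) • (- c m)) l
              = - (z (Fin.last k) * (Fk *ᵥ c) l) := by
            simp only [Matrix.mulVec, dotProduct, smul_eq_mul, Finset.mul_sum,
              ← Finset.sum_neg_distrib]
            congr 1; ext m; ring
          rw [h2, hFc]
          have := htop l
          linarith
        have := Matrix.mulVec_injective_iff_isUnit.2 (Matrix.isUnit_iff_isUnit_det Fk |>.2 hinv) h1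
        exact this
      -- last row gives z last * s = 0
      have hlrow := hz' (Fin.last k)
      rw [map_sum, Fin.sum_univ_castSucc] at hlrow
      have hws : σ (Fin.last k) (∑ m, lam m • g m) ≠ 0 := hs
      have hexp : ∀ w : Fin (k+1) → ℝ, ∑ m : Fin k, w m.castSucc • σ (Fin.last k) (g m.castSucc)
          + w (Fin.last k) • σ (Fin.last k) (g (Fin.last k))
          = w (Fin.last k) * σ (Fin.last k) (g (Fin.last k)) + ∑ m : Fin k, w m.castSucc * σ (Fin.last k) (g m.castSucc) := by
        intro w; rw [add_comm]; simp [smul_eq_mul]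
      have hzs : z (Fin.last k) * σ (Fin.last k) (∑ m, lam m • g m) = 0 := by
        rw [key (Fin.last k), hlast, one_mul, mul_add, Finset.mul_sum]
        have : ∀ m : Fin k, z (Fin.last k) * (lam m.castSucc * σ (Fin.last k) (g m.castSucc))
            = z m.castSucc * σ (Fin.last k) (g m.castSucc) := by
          intro m
          rw [hcast m, congrFun hzc m]
          simp; ring
        rw [Finset.sum_congr rfl (fun m _ => this m)]
        simp only [LinearMap.map_smul, smul_eq_mul] at hlrow
        linarith [hlrow]
      have hzl : z (Fin.last k) = 0 := by
        rcases mul_eq_zero.1 hzs with h | h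
        · exact h
        · exact absurd h hws
      funext i
      exact i.lastCases hzl (fun m => by
        have := congrFun hzc m
        simp [hzl] at this
        exact this)
    have := hker (x - y) (by rw [Matrix.mulVec_sub, hxy, sub_self])
    exact sub_eq_zero.mp (by funext i; have := congrFun this i; simpa [sub_eq_zero] using this)
  refine ⟨lam, by rw [hlast]; norm_num, ?_, ?_⟩
  · intro l
    exact l.lastCases hlastzero hzero
  · have hR : ∑ l : Fin k, ∑ m : Fin k,
        ((Fk⁻¹)ᵀ l m * σ l.castSucc (g (Fin.last k))) • g m.castSucc
        = ∑ m : Fin k, c m • g m.castSucc := by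
      rw [Finset.sum_comm]
      refine Finset.sum_congr rfl fun m _ => ?_
      rw [← Finset.sum_smul]
      congr 1
    rw [hlast, hR, neg_smul, one_smul, ← Finset.sum_neg_distrib]
    refine Finset.sum_congr rfl fun m _ => ?_
    rw [hcast, neg_smul]
end

section
/- Let f : X × Y → ℝ, let d ≤ dim span{f(x,·) : x ∈ X}, and suppose at each step k < d the greedy selection x_{k+1} = argmax_{x} ‖(f − I_k(f))(x,·)‖_Y, y_{k+1} = argmax_{y} |(f − I_k(f))(x_{k+1},y)| is performed over finite sets X and Y with some norm ‖·‖_Y on ℝ^Y. Then for each k < d, (f − I_k(f))(x_{k+1}, y_{k+1}) ≠ 0, and hence F^{k+1} is invertible; in particular F^d = (f(x_l,y_m))_{1≤l,m≤d} is invertible and the EIM representation I_d(f) is well defined. -/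
open Matrix BigOperators

theorem eim_greedy_nondegenerate {X Y : Type*} [Fintype X] [Fintype Y]
    [Nonempty X] [Nonempty Y]
    (f : X → Y → ℝ) (d : ℕ) (hd : 1 ≤ d)
    (hspan : (d : Cardinal) ≤
      Module.rank ℝ (Submodule.span ℝ (Set.range fun a : X => (fun b => f a b : Y → ℝ))))
    (x : Fin d → X) (y : Fin d → Y)
    -- an arbitrary norm on functions `Y → ℝ`
    (N : (Y → ℝ) → ℝ)
    (hN0 : ∀ g : Y → ℝ, N g = 0 ↔ g = 0)
    (hNadd : ∀ g h : Y → ℝ, N (g + h) ≤ N g + N h)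
    (hNsmul : ∀ (c : ℝ) (g : Y → ℝ), N (c • g) = |c| * N g)
    -- the residual at step `k`
    (R : ∀ k, k ≤ d → X → Y → ℝ)
    (hR : ∀ (k : ℕ) (hk : k ≤ d) (a : X) (b : Y),
      R k hk a b = f a b - EIMinterp f (fun l : Fin k => x (Fin.castLE hk l))
        (fun m : Fin k => y (Fin.castLE hk m)) a b)
    -- greedy selection: `x_{k+1}` maximizes `x ↦ ‖R_k(x,·)‖_Y`
    (hx : ∀ (k : ℕ) (hk : k < d) (a : X),
      N (fun b => R k hk.le a b) ≤ N (fun b => R k hk.le (x ⟨k, hk⟩) b))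
    -- and `y_{k+1}` maximizes `y ↦ |R_k(x_{k+1}, y)|`
    (hy : ∀ (k : ℕ) (hk : k < d) (b : Y),
      |R k hk.le (x ⟨k, hk⟩) b| ≤ |R k hk.le (x ⟨k, hk⟩) (y ⟨k, hk⟩)|) :
    (∀ (k : ℕ) (hk : k < d),
      R k hk.le (x ⟨k, hk⟩) (y ⟨k, hk⟩) ≠ 0 ∧
      IsUnit (Matrix.det (Matrix.of fun l m : Fin (k + 1) =>
        f (x (Fin.castLE hk l)) (y (Fin.castLE hk m))))) ∧
    IsUnit (Matrix.det (Matrix.of fun l m : Fin d => f (x l) (y m))) := by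
  classical
  have hN0' : N 0 = 0 := (hN0 0).mpr rfl
  have hNnonneg : ∀ g : Y → ℝ, 0 ≤ N g := by
    intro g
    have hneg : N (-g) = N g := by
      have := hNsmul (-1) g
      simpa using this
    have h := hNadd g (-g)
    rw [add_neg_cancel, hN0', hneg] at h
    linarith
  -- Step 1: the residual at the greedy point is nonzero (assuming nothing about the matrix).
  have keyA : ∀ (k : ℕ) (hk : k < d), R k hk.le (x ⟨k, hk⟩) (y ⟨k, hk⟩) ≠ 0 := by
    intro k hk hzero
    have h1 : ∀ b, R k hk.le (x ⟨k, hk⟩) b = 0 := by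
      intro b
      have h := hy k hk b
      rw [hzero, abs_zero] at h
      exact abs_eq_zero.mp (le_antisymm h (abs_nonneg _))
    have h2 : ∀ a b, R k hk.le a b = 0 := by
      intro a
      have hx' := hx k hk a
      have h0 : (fun b => R k hk.le (x ⟨k, hk⟩) b) = 0 := funext h1
      rw [h0, hN0'] at hx'
      have hz := (hN0 _).mp (le_antisymm hx' (hNnonneg _))
      intro b
      exact congrFun hz b
    set g : Fin k → (Y → ℝ) := fun l => fun b => f (x (Fin.castLE hk.le l)) b with hg
    have h3 : ∀ a : X, (fun b => f a b) ∈ Submodule.span ℝ (Set.range g) := by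
      intro a
      have hfa : (fun b => f a b) =
          ∑ l, (∑ m, ((Matrix.of fun l m : Fin k =>
            f (x (Fin.castLE hk.le l)) (y (Fin.castLE hk.le m)))⁻¹)ᵀ l m
              * f a (y (Fin.castLE hk.le m))) • g l := by
        funext b
        have h := h2 a b
        rw [hR] at h
        have hfb : f a b = EIMinterp f (fun l : Fin k => x (Fin.castLE hk.le l))
            (fun m : Fin k => y (Fin.castLE hk.le m)) a b := by linarith
        rw [hfb]
        simp only [EIMinterp, Finset.sum_apply, Pi.smul_apply, smul_eq_mul,
          Finset.sum_mul, hg]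
        refine Finset.sum_congr rfl fun l _ => Finset.sum_congr rfl fun m _ => by ring
      rw [hfa]
      exact Submodule.sum_mem _ fun l _ =>
        Submodule.smul_mem _ _ (Submodule.subset_span ⟨l, rfl⟩)
    have hle : Submodule.span ℝ (Set.range fun a : X => (fun b => f a b : Y → ℝ)) ≤
        Submodule.span ℝ (Set.range g) := by
      rw [Submodule.span_le]
      rintro _ ⟨a, rfl⟩
      exact h3 a
    have hcard : (Cardinal.mk (Set.range g)) ≤ (k : Cardinal) := by
      have h := Cardinal.mk_range_le_lift (f := g)
      rw [Cardinal.lift_uzero] at h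
      simpa using h
    have hrank1 : Module.rank ℝ (Submodule.span ℝ (Set.range g)) ≤ (k : Cardinal) :=
      (rank_span_le _).trans hcard
    have hdk : (d : Cardinal) ≤ (k : Cardinal) :=
      hspan.trans ((Submodule.rank_mono hle).trans hrank1)
    have : d ≤ k := Nat.cast_le.mp hdk
    omega
  -- Step 2: Schur-complement step for the determinant.
  have keyB : ∀ (k : ℕ) (hk : k < d),
      IsUnit (Matrix.det (Matrix.of fun l m : Fin k =>
        f (x (Fin.castLE hk.le l)) (y (Fin.castLE hk.le m)))) →
      IsUnit (Matrix.det (Matrix.of fun l m : Fin (k + 1) =>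
        f (x (Fin.castLE hk l)) (y (Fin.castLE hk m)))) := by
    intro k hk hdet
    set A : Matrix (Fin k) (Fin k) ℝ :=
      Matrix.of fun l m => f (x (Fin.castLE hk.le l)) (y (Fin.castLE hk.le m)) with hA
    set B : Matrix (Fin k) (Fin 1) ℝ :=
      Matrix.of fun l _ => f (x (Fin.castLE hk.le l)) (y ⟨k, hk⟩) with hB
    set C : Matrix (Fin 1) (Fin k) ℝ :=
      Matrix.of fun _ m => f (x ⟨k, hk⟩) (y (Fin.castLE hk.le m)) with hC
    set D : Matrix (Fin 1) (Fin 1) ℝ :=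
      Matrix.of fun _ _ => f (x ⟨k, hk⟩) (y ⟨k, hk⟩) with hD
    haveI : Invertible A := A.invertibleOfIsUnitDet hdet
    have hblock : (Matrix.of fun l m : Fin (k + 1) =>
        f (x (Fin.castLE hk l)) (y (Fin.castLE hk m)))
        = (Matrix.fromBlocks A B C D).submatrix finSumFinEquiv.symm finSumFinEquiv.symm := by
      ext i j
      induction i using Fin.lastCases with
      | last =>
        induction j using Fin.lastCases with
        | last =>
          simp only [Matrix.submatrix_apply, finSumFinEquiv_symm_last,
            Matrix.fromBlocks_apply₂₂, Matrix.of_apply, hD]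
          congr 1 <;> exact Fin.ext rfl
        | cast j =>
          rw [show Fin.castSucc j = Fin.castAdd 1 j from rfl]
          simp only [Matrix.submatrix_apply, finSumFinEquiv_symm_last,
            finSumFinEquiv_symm_apply_castAdd, Matrix.fromBlocks_apply₂₁, Matrix.of_apply, hC]
          congr 1 <;> exact Fin.ext rfl
      | cast i =>
        induction j using Fin.lastCases with
        | last =>
          rw [show Fin.castSucc i = Fin.castAdd 1 i from rfl]
          simp only [Matrix.submatrix_apply, finSumFinEquiv_symm_last,
            finSumFinEquiv_symm_apply_castAdd, Matrix.fromBlocks_apply₁₂, Matrix.of_apply, hB]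
          congr 1 <;> exact Fin.ext rfl
        | cast j =>
          rw [show Fin.castSucc i = Fin.castAdd 1 i from rfl,
            show Fin.castSucc j = Fin.castAdd 1 j from rfl]
          simp only [Matrix.submatrix_apply, finSumFinEquiv_symm_apply_castAdd,
            Matrix.fromBlocks_apply₁₁, Matrix.of_apply, hA]
          congr 1 <;> exact Fin.ext rfl
    have hSchur : (D - C * A⁻¹ * B).det = R k hk.le (x ⟨k, hk⟩) (y ⟨k, hk⟩) := by
      rw [Matrix.det_fin_one, hR]
      simp only [Matrix.sub_apply, Matrix.mul_apply, EIMinterp, Matrix.transpose_apply,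
        Matrix.of_apply, hA, hB, hC, hD, Finset.sum_mul]
      congr 1
      refine Finset.sum_congr rfl fun l _ => Finset.sum_congr rfl fun m _ => by ring
    have hdetsucc : (Matrix.of fun l m : Fin (k + 1) =>
        f (x (Fin.castLE hk l)) (y (Fin.castLE hk m))).det
        = A.det * R k hk.le (x ⟨k, hk⟩) (y ⟨k, hk⟩) := by
      rw [hblock, Matrix.det_submatrix_equiv_self, Matrix.det_fromBlocks₁₁,
        Matrix.invOf_eq_nonsing_inv, hSchur]
    rw [isUnit_iff_ne_zero, hdetsucc]
    exact mul_ne_zero (isUnit_iff_ne_zero.mp hdet) (keyA k hk)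
  have main : ∀ (k : ℕ) (hk : k ≤ d),
      IsUnit (Matrix.det (Matrix.of fun l m : Fin k =>
        f (x (Fin.castLE hk l)) (y (Fin.castLE hk m)))) := by
    intro k
    induction k with
    | zero => intro _; simp
    | succ n ih =>
      intro hk
      have hn : n < d := hk
      exact keyB n hn (ih hn.le)
  refine ⟨fun k hk => ⟨keyA k hk, main (k + 1) hk⟩, ?_⟩
  have h := main d le_rfl
  have he : (Matrix.of fun l m : Fin d => f (x (Fin.castLE le_rfl l)) (y (Fin.castLE le_rfl m)))
      = (Matrix.of fun l m : Fin d => f (x l) (y m)) := by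
    ext i j
    congr 1 <;> exact Fin.ext rfl
  rwa [he] at h
end
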